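/- There is no function F assigning to each antisymmetric integer-valued margin function m on {a,b,c,d} realizing one of the five margin orderings M_1–M_5 a single winner in {a,b,c,d}, depending only on the ordinal margin graph, such that: (i) the winner always lies in the defensible set of m; (ii) the winner is never a Condorcet loser; (iii) if m′ is obtained from m by a transition corresponding to adding voters who rank x uniquely first (the transitions M_1 ⇒_d M_2, M_3 ⇒_b M_2, M_1 ⇒_a M_4, M_5 ⇒_d M_4), then if x wins under m it wins under m′. Concretely: no choice function picking one element from each of D(M_1)={a,d}, D(M_2)={b,d}, D(M_3)∖{Condorcet loser}={b}, D(M_4)={a,d}, D(M_5)={d} can satisfy: winner(M_1)=d implies winner(M_2)=d; winner(M_3)=b implies winner(M_2)=b; winner(M_1)=a implies winner(M_4)=a; winner(M_5)=d implies winner(M_4)=d. -/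

import Mathlib

inductive Alt : Type
  | a | b | c | d
deriving DecidableEq

open Alt

/-- the combinatorial core of the impossibility theorem. No choice
of single winners w₁,…,w₅ for the ordinal margin graphs M_1,…,M_5, with each
winner drawn from the defensible set (minus the Condorcet loser in M_3), can
respect all four positive-involvement transitions
M_1 ⇒_d M_2, M_3 ⇒_b M_2, M_1 ⇒_a M_4, M_5 ⇒_d M_4. -/
theorem no_consistent_choice :
    ¬ ∃ w₁ w₂ w₃ w₄ w₅ : Alt,
      (w₁ = a ∨ w₁ = d) ∧ (w₂ = b ∨ w₂ = d) ∧ w₃ = b ∧ (w₄ = a ∨ w₄ = d) ∧ w₅ = d ∧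
      (w₁ = d → w₂ = d) ∧ (w₃ = b → w₂ = b) ∧ (w₁ = a → w₄ = a) ∧ (w₅ = d → w₄ = d) := by
  rintro ⟨w₁, w₂, w₃, w₄, w₅, hw₁, -, hw₃, -, hw₅, h₁₂, h₃₂, h₁₄, h₅₄⟩
  have hw₂ : w₂ = b := h₃₂ hw₃
  have hw₁ : w₁ = a := hw₁.resolve_right fun h ↦ Alt.noConfusion (hw₂.symm.trans (h₁₂ h))
  exact Alt.noConfusion ((h₁₄ hw₁).symm.trans (h₅₄ hw₅))
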